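/- arXiv:2407.05717 — 2 statements merged into one kernel-verified Lean document; each statement's English description precedes it below -/
import Mathlib

section
/- Let (Ω, 𝓕, ℙ) be a probability space, let S : Ω → Matrix(n,n,ℝ) be a random matrix that is almost surely symmetric and positive definite with entrywise expectation E[S] equal to the identity matrix I, and let v : Ω → ℝⁿ be a random vector with E[v] = v₀. Assume vᵀ·S⁻¹·v and vᵀ·S·v-type expressions appearing below are integrable (in particular E[‖S^{1/2}v₀‖²] and E[‖S^{-1/2}v‖²] are finite). Then E[vᵀ · S⁻¹ · v] ≥ v₀ᵀ v₀. -/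
open Matrix MeasureTheory

/-!
Expanding `(v - S v₀)ᵀ S⁻¹ (v - S v₀) ≥ 0` gives, pointwise, `vᵀ S⁻¹ v ≥ 2 v₀ᵀ v - v₀ᵀ S v₀`.
The right-hand side is affine in `v` and `S`, so its expectation is `2 v₀ᵀ v₀ - v₀ᵀ v₀ = v₀ᵀ v₀`
when `E[v] = v₀` and `E[S] = I`.
-/

lemma Matrix.PosDef.two_mul_dotProduct_sub_le_dotProduct_inv_mulVec {ι : Type*} [Fintype ι]
    [DecidableEq ι] {S : Matrix ι ι ℝ} (hS : S.PosDef) (v x : ι → ℝ) :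
    2 * (x ⬝ᵥ v) - x ⬝ᵥ (S *ᵥ x) ≤ v ⬝ᵥ (S⁻¹ *ᵥ v) := by
  have hdet : IsUnit S.det := isUnit_iff_ne_zero.mpr hS.det_pos.ne'
  have hinv_mul : S⁻¹ *ᵥ (S *ᵥ x) = x := by
    rw [mulVec_mulVec, nonsing_inv_mul _ hdet, one_mulVec]
  have hsymm : Sᵀ = S := hS.1
  have hcross : (S *ᵥ x) ⬝ᵥ (S⁻¹ *ᵥ v) = x ⬝ᵥ v := by
    rw [dotProduct_comm, dotProduct_mulVec, ← mulVec_transpose, hsymm,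
      mulVec_mulVec, mul_nonsing_inv _ hdet, one_mulVec, dotProduct_comm]
  have hnonneg : 0 ≤ (v - S *ᵥ x) ⬝ᵥ (S⁻¹ *ᵥ (v - S *ᵥ x)) := by
    simpa using hS.inv.posSemidef.dotProduct_mulVec_nonneg (v - S *ᵥ x)
  rw [mulVec_sub, sub_dotProduct, dotProduct_sub, dotProduct_sub, hinv_mul, hcross,
    dotProduct_comm v x, dotProduct_comm (S *ᵥ x) x] at hnonneg
  linarith

section Expectation

variable {Ω ι : Type*} [MeasurableSpace Ω] {μ : Measure Ω} [Fintype ι]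

lemma integrable_const_dotProduct {v : Ω → ι → ℝ} (hv : ∀ i, Integrable (fun ω => v ω i) μ)
    (x : ι → ℝ) : Integrable (fun ω => x ⬝ᵥ v ω) μ :=
  integrable_finsetSum _ fun i _ => (hv i).const_mul (x i)

lemma integral_const_dotProduct {v : Ω → ι → ℝ} (hv : ∀ i, Integrable (fun ω => v ω i) μ)
    (x : ι → ℝ) : ∫ ω, x ⬝ᵥ v ω ∂μ = x ⬝ᵥ fun i => ∫ ω, v ω i ∂μ := by
  simp only [dotProduct]
  rw [integral_finsetSum _ fun i _ => (hv i).const_mul (x i)]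
  simp only [integral_const_mul]

lemma integrable_mulVec_apply {S : Ω → Matrix ι ι ℝ}
    (hS : ∀ i j, Integrable (fun ω => S ω i j) μ) (y : ι → ℝ) (i : ι) :
    Integrable (fun ω => (S ω *ᵥ y) i) μ := by
  simpa only [mulVec, dotProduct_comm] using integrable_const_dotProduct (hS i) y

lemma integrable_dotProduct_mulVec {S : Ω → Matrix ι ι ℝ}
    (hS : ∀ i j, Integrable (fun ω => S ω i j) μ) (x y : ι → ℝ) :
    Integrable (fun ω => x ⬝ᵥ (S ω *ᵥ y)) μ :=
  integrable_const_dotProduct (integrable_mulVec_apply hS y) x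

lemma integral_dotProduct_mulVec {S : Ω → Matrix ι ι ℝ}
    (hS : ∀ i j, Integrable (fun ω => S ω i j) μ) (x y : ι → ℝ) :
    ∫ ω, x ⬝ᵥ (S ω *ᵥ y) ∂μ = x ⬝ᵥ ((Matrix.of fun i j => ∫ ω, S ω i j ∂μ) *ᵥ y) := by
  rw [integral_const_dotProduct (integrable_mulVec_apply hS y)]
  congr 1
  ext i
  simp only [mulVec, of_apply, dotProduct_comm _ y]
  exact integral_const_dotProduct (hS i) y

end Expectation

theorem expected_inverse_quadratic_form_ge_general
    {Ω : Type*} [MeasurableSpace Ω] (ℙ : Measure Ω)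
    {n : ℕ}
    (S : Ω → Matrix (Fin n) (Fin n) ℝ)
    (hSpd : ∀ᵐ ω ∂ℙ, (S ω).PosDef)
    (hSmean : (Matrix.of fun i j => ∫ ω, S ω i j ∂ℙ) = 1)
    (v : Ω → Fin n → ℝ) (v₀ : Fin n → ℝ)
    (hvmean : ∀ i, ∫ ω, v ω i ∂ℙ = v₀ i)
    (hvint : ∀ i, Integrable (fun ω => v ω i) ℙ)
    (hSint : ∀ i j, Integrable (fun ω => S ω i j) ℙ)
    (hquadSinv : Integrable (fun ω => v ω ⬝ᵥ ((S ω)⁻¹ *ᵥ v ω)) ℙ) :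
    ∫ ω, v ω ⬝ᵥ ((S ω)⁻¹ *ᵥ v ω) ∂ℙ ≥ v₀ ⬝ᵥ v₀ := by
  have hlin := integrable_const_dotProduct hvint v₀
  have hquad := integrable_dotProduct_mulVec hSint v₀ v₀
  have hbound : ∀ᵐ ω ∂ℙ, 2 * (v₀ ⬝ᵥ v ω) - v₀ ⬝ᵥ (S ω *ᵥ v₀) ≤
      v ω ⬝ᵥ ((S ω)⁻¹ *ᵥ v ω) := by
    filter_upwards [hSpd] with ω hω
    exact hω.two_mul_dotProduct_sub_le_dotProduct_inv_mulVec (v ω) v₀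
  calc v₀ ⬝ᵥ v₀ = ∫ ω, 2 * (v₀ ⬝ᵥ v ω) - v₀ ⬝ᵥ (S ω *ᵥ v₀) ∂ℙ := by
        rw [integral_sub (hlin.const_mul 2) hquad, integral_const_mul,
          integral_const_dotProduct hvint, integral_dotProduct_mulVec hSint, hSmean, one_mulVec]
        simp only [hvmean]
        ring
    _ ≤ ∫ ω, v ω ⬝ᵥ ((S ω)⁻¹ *ᵥ v ω) ∂ℙ :=
        integral_mono_ae ((hlin.const_mul 2).sub hquad) hquadSinv hbound

/-- **Lemma 2 (Appendix A) of the paper (inequality part).**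
If `S` is an almost surely symmetric positive definite random matrix with `E[S] = I`
and `v` is a random vector with `E[v] = v₀`, then `E[vᵀ S⁻¹ v] ≥ v₀ᵀ v₀`.
The integrability hypotheses correspond to the finiteness of `E[‖S^{1/2} v₀‖²] = E[v₀ᵀ S v₀]`
and `E[‖S^{-1/2} v‖²] = E[vᵀ S⁻¹ v]`. Expectations are taken entrywise. -/
theorem expected_inverse_quadratic_form_ge
    {Ω : Type*} [MeasurableSpace Ω] (ℙ : Measure Ω) [IsProbabilityMeasure ℙ]
    {n : ℕ} (hn : 0 < n)
    (S : Ω → Matrix (Fin n) (Fin n) ℝ)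
    (hSpd : ∀ᵐ ω ∂ℙ, (S ω).PosDef)
    (hSmean : (Matrix.of fun i j => ∫ ω, S ω i j ∂ℙ) = 1)
    (v : Ω → Fin n → ℝ) (v₀ : Fin n → ℝ)
    (hvmean : ∀ i, ∫ ω, v ω i ∂ℙ = v₀ i)
    (hvint : ∀ i, Integrable (fun ω => v ω i) ℙ)
    (hSint : ∀ i j, Integrable (fun ω => S ω i j) ℙ)
    (hquadS : Integrable (fun ω => v₀ ⬝ᵥ (S ω *ᵥ v₀)) ℙ)
    (hquadSinv : Integrable (fun ω => v ω ⬝ᵥ ((S ω)⁻¹ *ᵥ v ω)) ℙ) :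
    ∫ ω, v ω ⬝ᵥ ((S ω)⁻¹ *ᵥ v ω) ∂ℙ ≥ v₀ ⬝ᵥ v₀ :=
  expected_inverse_quadratic_form_ge_general ℙ S hSpd hSmean v v₀ hvmean hvint hSint hquadSinv
end

section
/- Let (Ω, 𝓕, ℙ) be a probability space, let P : Ω → Matrix(m,n,ℝ) be a random matrix with entrywise expectation E[P] = P̄, and let S : Ω → Matrix(n,n,ℝ) be almost surely symmetric positive definite with E[S] = I (the identity), with all expressions below entrywise integrable. Then the matrix E[P · S⁻¹ · Pᵀ] − P̄ · P̄ᵀ is positive semidefinite. -/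
/-!
Fix `v` and put `x = Pᵀ v`, `y = P̄ᵀ v`. For positive definite `S`, expanding
`0 ≤ (x - S y)ᵀ S⁻¹ (x - S y)` gives `xᵀ S⁻¹ x ≥ 2 yᵀ x - yᵀ S y`, whose right-hand side is
affine in `P` and `S`. Taking expectations with `E[P] = P̄` and `E[S] = 1` turns it into
`vᵀ E[P S⁻¹ Pᵀ] v ≥ 2 |y|² - |y|² = vᵀ P̄ P̄ᵀ v`.
-/

open Matrix MeasureTheory

section Integral

variable {Ω : Type*} [MeasurableSpace Ω] {μ : Measure Ω} {m n : Type*}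

lemma dotProduct_mulVec_eq_sum [Fintype m] [Fintype n] (u : m → ℝ) (B : Matrix m n ℝ)
    (w : n → ℝ) :
    u ⬝ᵥ B *ᵥ w = ∑ i, ∑ j, u i * (B i j * w j) := by
  simp [dotProduct, mulVec, Finset.mul_sum]

lemma integrable_dotProduct_mulVec_s5 [Fintype m] [Fintype n] {A : Ω → Matrix m n ℝ}
    (hA : ∀ i j, Integrable (fun ω => A ω i j) μ)
    (u : m → ℝ) (w : n → ℝ) : Integrable (fun ω => u ⬝ᵥ A ω *ᵥ w) μ := by
  simp only [dotProduct_mulVec_eq_sum]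
  exact integrable_finsetSum _ fun i _ => integrable_finsetSum _ fun j _ =>
    ((hA i j).mul_const _).const_mul _

lemma integral_dotProduct_mulVec_s5 [Fintype m] [Fintype n] {A : Ω → Matrix m n ℝ}
    (hA : ∀ i j, Integrable (fun ω => A ω i j) μ)
    (u : m → ℝ) (w : n → ℝ) :
    ∫ ω, u ⬝ᵥ A ω *ᵥ w ∂μ = u ⬝ᵥ (of fun i j => ∫ ω, A ω i j ∂μ) *ᵥ w := by
  have hterm (i j) : Integrable (fun ω => u i * (A ω i j * w j)) μ :=
    ((hA i j).mul_const _).const_mul _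
  simp only [dotProduct_mulVec_eq_sum, of_apply]
  rw [integral_finsetSum _ fun i _ => integrable_finsetSum _ fun j _ => hterm i j]
  refine Finset.sum_congr rfl fun i _ => ?_
  rw [integral_finsetSum _ fun j _ => hterm i j]
  simp only [integral_const_mul, integral_mul_const]

lemma isHermitian_integral_of_ae {A : Ω → Matrix n n ℝ} (hA : ∀ᵐ ω ∂μ, (A ω).IsHermitian) :
    (of fun i j => ∫ ω, A ω i j ∂μ).IsHermitian := by
  ext i j
  refine integral_congr_ae ?_
  filter_upwards [hA] with ω hω
  exact congrFun (congrFun hω i) j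

end Integral

section PosDef

variable {m n : Type*} [Fintype m] [Fintype n]

lemma Matrix.PosDef.two_mul_dotProduct_sub_le [DecidableEq n] {S : Matrix n n ℝ} (hS : S.PosDef)
    (x y : n → ℝ) :
    2 * (y ⬝ᵥ x) - y ⬝ᵥ S *ᵥ y ≤ x ⬝ᵥ S⁻¹ *ᵥ x := by
  have hSinv : S⁻¹ *ᵥ (S *ᵥ y) = y := by
    rw [mulVec_mulVec, nonsing_inv_mul S ((isUnit_iff_isUnit_det S).1 hS.isUnit), one_mulVec]
  have hsymm : x ⬝ᵥ S⁻¹ *ᵥ (S *ᵥ y) = (S *ᵥ y) ⬝ᵥ S⁻¹ *ᵥ x := by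
    rw [dotProduct_mulVec, ← mulVec_transpose, ← conjTranspose_eq_transpose_of_trivial,
      hS.isHermitian.inv.eq, dotProduct_comm]
  have hnonneg := hS.inv.posSemidef.dotProduct_mulVec_nonneg (x - S *ᵥ y)
  rw [star_trivial, mulVec_sub, sub_dotProduct, dotProduct_sub, dotProduct_sub, ← hsymm,
    hSinv, dotProduct_comm (S *ᵥ y) y, dotProduct_comm x y] at hnonneg
  linarith

lemma dotProduct_mul_mul_transpose_mulVec (A : Matrix m n ℝ) (B : Matrix n n ℝ) (v : m → ℝ) :
    v ⬝ᵥ (A * B * Aᵀ) *ᵥ v = (Aᵀ *ᵥ v) ⬝ᵥ B *ᵥ (Aᵀ *ᵥ v) := by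
  rw [← mulVec_mulVec, ← mulVec_mulVec, dotProduct_mulVec, ← mulVec_transpose]

lemma Matrix.PosDef.two_mul_dotProduct_mulVec_sub_le [DecidableEq n] {S : Matrix n n ℝ}
    (hS : S.PosDef) (A : Matrix m n ℝ)
    (v : m → ℝ) (w : n → ℝ) :
    2 * (v ⬝ᵥ A *ᵥ w) - w ⬝ᵥ S *ᵥ w ≤ v ⬝ᵥ (A * S⁻¹ * Aᵀ) *ᵥ v := by
  rw [dotProduct_mul_mul_transpose_mulVec, dotProduct_mulVec, ← mulVec_transpose,
    dotProduct_comm]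
  exact hS.two_mul_dotProduct_sub_le _ w

end PosDef

theorem expected_sandwich_sub_outer_posSemidef_general
    {Ω : Type*} [MeasurableSpace Ω] (ℙ : Measure Ω) [IsProbabilityMeasure ℙ]
    {m n : ℕ}
    (P : Ω → Matrix (Fin m) (Fin n) ℝ) (Pbar : Matrix (Fin m) (Fin n) ℝ)
    (hPmean : (Matrix.of fun i j => ∫ ω, P ω i j ∂ℙ) = Pbar)
    (S : Ω → Matrix (Fin n) (Fin n) ℝ)
    (hSpd : ∀ᵐ ω ∂ℙ, (S ω).PosDef)
    (hSmean : (Matrix.of fun i j => ∫ ω, S ω i j ∂ℙ) = 1)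
    (hPint : ∀ i j, Integrable (fun ω => P ω i j) ℙ)
    (hSint : ∀ i j, Integrable (fun ω => S ω i j) ℙ)
    (hint : ∀ i j, Integrable (fun ω => (P ω * (S ω)⁻¹ * (P ω)ᵀ) i j) ℙ) :
    ((Matrix.of fun i j => ∫ ω, (P ω * (S ω)⁻¹ * (P ω)ᵀ) i j ∂ℙ)
      - Pbar * Pbarᵀ).PosSemidef := by
  have hherm : ∀ᵐ ω ∂ℙ, (P ω * (S ω)⁻¹ * (P ω)ᵀ).IsHermitian := by
    filter_upwards [hSpd] with ω hω
    simpa using (hω.inv.posSemidef.mul_mul_conjTranspose_same (P ω)).isHermitian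
  refine posSemidef_iff_dotProduct_mulVec.2 ⟨(isHermitian_integral_of_ae hherm).sub
    (by simpa using isHermitian_mul_conjTranspose_self Pbar), fun v => ?_⟩
  set y := Pbarᵀ *ᵥ v
  have hlhs_int : Integrable (fun ω => 2 * (v ⬝ᵥ P ω *ᵥ y) - y ⬝ᵥ S ω *ᵥ y) ℙ :=
    ((integrable_dotProduct_mulVec_s5 hPint v y).const_mul 2).sub
      (integrable_dotProduct_mulVec_s5 hSint y y)
  have hlower : 2 * (v ⬝ᵥ Pbar *ᵥ y) - y ⬝ᵥ y
      ≤ v ⬝ᵥ (of fun i j => ∫ ω, (P ω * (S ω)⁻¹ * (P ω)ᵀ) i j ∂ℙ) *ᵥ v :=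
    calc 2 * (v ⬝ᵥ Pbar *ᵥ y) - y ⬝ᵥ y
        = ∫ ω, 2 * (v ⬝ᵥ P ω *ᵥ y) - y ⬝ᵥ S ω *ᵥ y ∂ℙ := by
          rw [integral_sub ((integrable_dotProduct_mulVec_s5 hPint v y).const_mul 2)
            (integrable_dotProduct_mulVec_s5 hSint y y), integral_const_mul,
            integral_dotProduct_mulVec_s5 hPint, integral_dotProduct_mulVec_s5 hSint, hPmean, hSmean,
            one_mulVec]
      _ ≤ ∫ ω, v ⬝ᵥ (P ω * (S ω)⁻¹ * (P ω)ᵀ) *ᵥ v ∂ℙ := by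
          refine integral_mono_ae hlhs_int (integrable_dotProduct_mulVec_s5 hint v v) ?_
          filter_upwards [hSpd] with ω hω
          exact hω.two_mul_dotProduct_mulVec_sub_le (P ω) v y
      _ = _ := integral_dotProduct_mulVec_s5 hint v v
  have houter : v ⬝ᵥ Pbar *ᵥ y = y ⬝ᵥ y := by
    rw [dotProduct_mulVec, ← mulVec_transpose, dotProduct_comm]
  rw [star_trivial, sub_mulVec, dotProduct_sub, ← mulVec_mulVec]
  linarith

/-- **Key matrix inequality in the proof of Theorem 1 of the paper.**
If `P` is a random `m × n` matrix with entrywise mean `P̄` and `S` is an almost surely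
symmetric positive definite random `n × n` matrix with entrywise mean the identity,
then `E[P S⁻¹ Pᵀ] − P̄ P̄ᵀ` is positive semidefinite. -/
theorem expected_sandwich_sub_outer_posSemidef
    {Ω : Type*} [MeasurableSpace Ω] (ℙ : Measure Ω) [IsProbabilityMeasure ℙ]
    {m n : ℕ} (hm : 0 < m) (hn : 0 < n)
    (P : Ω → Matrix (Fin m) (Fin n) ℝ) (Pbar : Matrix (Fin m) (Fin n) ℝ)
    (hPmean : (Matrix.of fun i j => ∫ ω, P ω i j ∂ℙ) = Pbar)
    (S : Ω → Matrix (Fin n) (Fin n) ℝ)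
    (hSpd : ∀ᵐ ω ∂ℙ, (S ω).PosDef)
    (hSmean : (Matrix.of fun i j => ∫ ω, S ω i j ∂ℙ) = 1)
    (hPint : ∀ i j, Integrable (fun ω => P ω i j) ℙ)
    (hSint : ∀ i j, Integrable (fun ω => S ω i j) ℙ)
    (hint : ∀ i j, Integrable (fun ω => (P ω * (S ω)⁻¹ * (P ω)ᵀ) i j) ℙ) :
    ((Matrix.of fun i j => ∫ ω, (P ω * (S ω)⁻¹ * (P ω)ᵀ) i j ∂ℙ)
      - Pbar * Pbarᵀ).PosSemidef :=
  expected_sandwich_sub_outer_posSemidef_general ℙ P Pbar hPmean S hSpd hSmean hPint hSint hint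
end
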